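/- Let ℓ: V°(τ) → ℤ be labels on the white vertices of a mobile encoding a pointed planar map via the BDG bijection, with ℓ(ρ) = min_v ℓ(v) - 1 for the marked vertex ρ. Then the number of distinct labelings of a fixed mobile tree τ with black vertex set V• equals ∏_{v∈V•} C(2·deg(v)-1, deg(v)-1). -/
import Mathlib


/-- Rooted planar trees. -/
inductive PTree where
  | node : List PTree → PTree

mutual
  /-- The list of all vertex positions of a planar tree, encoded as paths from the root:
  `i :: p` is position `p` inside the `i`-th subtree of the root. -/
  def PTree.positions : PTree → List (List ℕ)
    | .node ts => [] :: PTree.positionsAux 0 ts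
  /-- Positions in a forest whose trees are indexed starting from `i`. -/
  def PTree.positionsAux : ℕ → List PTree → List (List ℕ)
    | _, [] => []
    | i, t :: ts =>
        (PTree.positions t).map (fun p => i :: p) ++ PTree.positionsAux (i + 1) ts
end

/-- The number of children of the vertex at position `p` in the planar tree `τ`. -/
def PTree.childCount (τ : PTree) (p : List ℕ) : ℕ :=
  τ.positions.countP (fun q => q.length == p.length + 1 && q.take p.length == p)

namespace BDG

def PTree.subtree? : PTree → List ℕ → Option PTree
  | t, [] => some t
  | .node ts, i :: p => if h : i < ts.length then PTree.subtree? ts[i] p else none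

lemma mem_positionsAux {q : List ℕ} : ∀ (ts : List PTree) (n : ℕ),
    q ∈ PTree.positionsAux n ts ↔
      ∃ i, ∃ h : i < ts.length, ∃ r, q = (n + i) :: r ∧ r ∈ ts[i].positions
  | [], n => by simp [PTree.positionsAux]
  | t :: ts, n => by
    simp only [PTree.positionsAux, List.mem_append, List.mem_map,
      mem_positionsAux ts (n+1)]
    constructor
    · rintro (⟨r, hr, rfl⟩ | ⟨i, h, r, rfl, hr⟩)
      · exact ⟨0, by simp, r, by simp, hr⟩
      · exact ⟨i + 1, by simpa using h, r, by simp [Nat.add_assoc, Nat.add_comm 1 i], by simpa using hr⟩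
    · rintro ⟨i, h, r, rfl, hr⟩
      cases i with
      | zero => exact Or.inl ⟨r, hr, by simp⟩
      | succ i => exact Or.inr ⟨i, by simpa using h, r, by simp [Nat.add_assoc, Nat.add_comm 1 i], by simpa using hr⟩

lemma nil_mem_positions (τ : PTree) : [] ∈ τ.positions := by
  cases τ with | node ts => simp [PTree.positions]

lemma mem_positions_node {q : List ℕ} {ts : List PTree} :
    q ∈ (PTree.node ts).positions ↔
      q = [] ∨ ∃ i, ∃ h : i < ts.length, ∃ r, q = i :: r ∧ r ∈ ts[i].positions := by
  simp [PTree.positions, mem_positionsAux]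

lemma subtree?_isSome_iff : ∀ (q : List ℕ) (τ : PTree),
    (PTree.subtree? τ q).isSome ↔ q ∈ τ.positions
  | [], τ => by simp [PTree.subtree?, nil_mem_positions]
  | i :: p, .node ts => by
    rw [mem_positions_node]
    simp only [PTree.subtree?]
    by_cases h : i < ts.length
    · simp only [dif_pos h, subtree?_isSome_iff p ts[i]]
      constructor
      · intro hp; exact Or.inr ⟨i, h, p, rfl, hp⟩
      · rintro (h' | ⟨i', h', r, he, hr⟩)
        · simp at h'
        · obtain ⟨rfl, rfl⟩ : i' = i ∧ r = p := by
            constructor <;> [exact (List.cons.injEq .. ▸ he).1.symm; exact ((List.cons.injEq ..) ▸ he).2.symm]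
          exact hr
    · simp only [dif_neg h, Option.isSome_none, Bool.false_eq_true, false_iff]
      rintro (h' | ⟨i', h', r, he, hr⟩)
      · simp at h'
      · cases he; exact h h'

lemma subtree?_append : ∀ (p : List ℕ) (τ : PTree) (r : List ℕ),
    PTree.subtree? τ (p ++ r) = (PTree.subtree? τ p).bind (fun t => PTree.subtree? t r)
  | [], τ, r => by simp [PTree.subtree?]
  | i :: p, .node ts, r => by
    simp only [List.cons_append, PTree.subtree?]
    by_cases h : i < ts.length
    · simp [dif_pos h, subtree?_append p ts[i] r]
    · simp [dif_neg h]

lemma ne_nil_of_mem_positionsAux {q : List ℕ} {ts : List PTree} {n : ℕ}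
    (h : q ∈ PTree.positionsAux n ts) : q ≠ [] := by
  rw [mem_positionsAux] at h
  obtain ⟨i, _, r, rfl, _⟩ := h
  simp

lemma countP_nil_positions (t : PTree) : (t.positions).countP (fun q => q == []) = 1 := by
  cases t with
  | node us =>
    rw [PTree.positions, List.countP_cons]
    have h0 : (PTree.positionsAux 0 us).countP (fun q => q == []) = 0 := by
      rw [List.countP_eq_zero]
      intro q hq
      simpa using ne_nil_of_mem_positionsAux hq
    rw [h0]
    simp

lemma countP_len_one : ∀ (ts : List PTree) (n : ℕ),
    (PTree.positionsAux n ts).countP (fun q => q.length == 1) = ts.length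
  | [], n => by simp [PTree.positionsAux]
  | t :: ts, n => by
    rw [PTree.positionsAux, List.countP_append, List.countP_map, countP_len_one ts (n+1)]
    have : (t.positions).countP ((fun q => q.length == 1) ∘ (fun p => n :: p))
        = (t.positions).countP (fun q => q == []) := by
      apply List.countP_congr
      intro q _
      simp [Function.comp, List.length_eq_zero_iff]
    rw [this, countP_nil_positions, List.length_cons, Nat.add_comm]

lemma childCount_node_nil (ts : List PTree) :
    (PTree.node ts).childCount [] = ts.length := by
  rw [PTree.childCount]
  simp only [List.length_nil, List.take_zero, beq_self_eq_true, Bool.and_true, Nat.zero_add]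
  rw [PTree.positions, List.countP_cons, countP_len_one]
  simp

lemma countP_aux_cons (i : ℕ) (p : List ℕ) : ∀ (ts : List PTree) (n : ℕ),
    (PTree.positionsAux n ts).countP
        (fun q => q.length == (i :: p).length + 1 && q.take (i :: p).length == (i :: p))
      = if n ≤ i ∧ i - n < ts.length then
          (ts.getD (i - n) (PTree.node [])).childCount p else 0
  | [], n => by
    rw [show PTree.positionsAux n [] = [] from rfl, List.countP_nil,
      if_neg (fun h => by simpa using h.2)]
  | t :: ts, n => by
    rw [PTree.positionsAux, List.countP_append, List.countP_map,
      countP_aux_cons i p ts (n+1)]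
    have hfst : (t.positions).countP
        ((fun q => q.length == (i :: p).length + 1 && q.take (i :: p).length == (i :: p)) ∘ (fun r => n :: r))
        = if n = i then t.childCount p else 0 := by
      by_cases hni : n = i
      · subst hni
        rw [if_pos rfl, PTree.childCount]
        apply List.countP_congr
        intro q _
        simp [Function.comp, List.length_cons]
      · rw [if_neg hni, List.countP_eq_zero]
        intro q _
        simp only [Function.comp, List.length_cons, List.take_succ_cons, Bool.and_eq_true,
          beq_iff_eq, List.cons.injEq]
        rintro ⟨-, h1, -⟩
        exact hni h1
    rw [hfst]
    rcases Nat.lt_trichotomy n i with h | h | h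
    · rw [if_neg (by omega), Nat.zero_add]
      by_cases hb : n + 1 ≤ i ∧ i - (n + 1) < ts.length
      · rw [if_pos hb, if_pos (by simp only [List.length_cons]; omega)]
        have : i - n = (i - (n + 1)) + 1 := by omega
        rw [this, List.getD_cons_succ]
      · rw [if_neg hb, if_neg (fun hh => hb (by simp only [List.length_cons] at hh; constructor <;> omega))]
    · subst h
      rw [if_pos rfl, if_neg (by omega), if_pos (by simp only [List.length_cons]; constructor <;> omega)]
      simp
    · rw [if_neg (by omega), if_neg (by omega), if_neg (by simp only [List.length_cons]; omega)]

lemma childCount_node_cons {ts : List PTree} {i : ℕ} (p : List ℕ) (h : i < ts.length) :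
    (PTree.node ts).childCount (i :: p) = ts[i].childCount p := by
  rw [PTree.childCount, PTree.positions, List.countP_cons]
  have h2 := countP_aux_cons i p ts 0
  rw [Nat.sub_zero] at h2
  rw [h2, if_pos ⟨Nat.zero_le i, h⟩]
  simp [List.getD_eq_getElem?_getD, List.getElem?_eq_getElem h]

lemma childCount_eq_of_subtree : ∀ (q : List ℕ) (τ : PTree) (ts : List PTree),
    PTree.subtree? τ q = some (PTree.node ts) → τ.childCount q = ts.length
  | [], .node us, ts => by
    intro h
    simp only [PTree.subtree?, Option.some.injEq, PTree.node.injEq] at h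
    subst h
    exact childCount_node_nil us
  | i :: p, .node us, ts => by
    intro h
    simp only [PTree.subtree?] at h
    by_cases hi : i < us.length
    · rw [dif_pos hi] at h
      rw [childCount_node_cons p hi]
      exact childCount_eq_of_subtree p us[i] ts h
    · rw [dif_neg hi] at h; cases h

lemma exists_subtree_of_mem {q : List ℕ} {τ : PTree} (h : q ∈ τ.positions) :
    ∃ ts, PTree.subtree? τ q = some (PTree.node ts) := by
  have := (subtree?_isSome_iff q τ).2 h
  obtain ⟨t, ht⟩ := Option.isSome_iff_exists.1 this
  cases t with
  | node ts => exact ⟨ts, ht⟩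

lemma append_mem_iff {q : List ℕ} {τ : PTree} (h : q ∈ τ.positions) (j : ℕ) :
    q ++ [j] ∈ τ.positions ↔ j < τ.childCount q := by
  obtain ⟨ts, hts⟩ := exists_subtree_of_mem h
  rw [← subtree?_isSome_iff, subtree?_append, hts,
    childCount_eq_of_subtree q τ ts hts, Option.bind_some]
  simp only [PTree.subtree?]
  by_cases hj : j < ts.length
  · simp [dif_pos hj, PTree.subtree?, hj]
  · simp [dif_neg hj, hj]

lemma mem_of_append_mem {q : List ℕ} {τ : PTree} {j : ℕ} (h : q ++ [j] ∈ τ.positions) :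
    q ∈ τ.positions := by
  rw [← subtree?_isSome_iff] at h ⊢
  rw [subtree?_append] at h
  cases ho : PTree.subtree? τ q with
  | none => rw [ho] at h; simp at h
  | some t => simp [ho]

lemma positionsAux_nodup (ts : List PTree) (H : ∀ t ∈ ts, t.positions.Nodup) :
    ∀ n : ℕ, (PTree.positionsAux n ts).Nodup := by
  induction ts with
  | nil => intro n; simp [PTree.positionsAux]
  | cons t ts ih =>
    intro n
    rw [PTree.positionsAux]
    apply List.Nodup.append
    · exact (H t (by simp)).map (fun a b h => by simpa using h)
    · exact ih (fun u hu => H u (by simp [hu])) (n + 1)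
    · intro q hq hq'
      obtain ⟨r, hr, rfl⟩ := List.mem_map.1 hq
      rw [mem_positionsAux] at hq'
      obtain ⟨i, hi, r', he, _⟩ := hq'
      have : n = n + 1 + i := (List.cons.injEq .. ▸ he).1
      omega

theorem positions_nodup : (t : PTree) → t.positions.Nodup
  | .node ts => by
    rw [PTree.positions]
    refine List.Nodup.cons ?_ (positionsAux_nodup ts (fun t ht => positions_nodup t) 0)
    intro h
    exact ne_nil_of_mem_positionsAux h rfl
termination_by t => sizeOf t
decreasing_by
  have := List.sizeOf_lt_of_mem ht
  simp only [PTree.node.sizeOf_spec]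
  omega

lemma dropLast_mem {p : List ℕ} {τ : PTree} (h : p ∈ τ.positions) (hne : p ≠ []) :
    p.dropLast ∈ τ.positions ∧
      p.dropLast ++ [p.getLast hne] = p ∧
      p.getLast hne < τ.childCount p.dropLast := by
  have he : p.dropLast ++ [p.getLast hne] = p := List.dropLast_append_getLast hne
  have h2 : p.dropLast ++ [p.getLast hne] ∈ τ.positions := by rw [he]; exact h
  have h3 : p.dropLast ∈ τ.positions := mem_of_append_mem h2
  exact ⟨h3, he, (append_mem_iff h3 _).1 h2⟩

def lblAux (g : List ℕ → ℕ → ℤ) (p : List ℕ) : ℤ :=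
  if h : p.length < 2 then 0
  else lblAux g p.dropLast.dropLast +
    ∑ i ∈ Finset.range
      (p.getLast (by intro hE; rw [hE] at h; exact h (by simp)) + 1), g p.dropLast i
termination_by p.length
decreasing_by
  simp only [List.length_dropLast]
  omega

lemma lblAux_nil (g : List ℕ → ℕ → ℤ) : lblAux g [] = 0 := by
  rw [lblAux]; simp

lemma lblAux_concat (g : List ℕ → ℕ → ℤ) {q : List ℕ} (hq : q ≠ []) (j : ℕ) :
    lblAux g (q ++ [j]) = lblAux g q.dropLast + ∑ i ∈ Finset.range (j + 1), g q i := by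
  rw [lblAux]
  have hlen : ¬ (q ++ [j]).length < 2 := by
    have := List.length_pos_iff.2 hq
    simp only [List.length_append, List.length_cons, List.length_nil]
    omega
  rw [dif_neg hlen]
  congr 1
  · rw [List.dropLast_concat]
  · rw [List.dropLast_concat]
    congr 1
    rw [List.getLast_append]
    simp

def nodeLab (τ : PTree) (ℓ : List ℕ → ℤ) (q : List ℕ) : Fin (τ.childCount q + 1) → ℤ :=
  fun k => if (k : ℕ) = 0 then ℓ q.dropLast else ℓ (q ++ [(k : ℕ) - 1])

def inc (τ : PTree) (ℓ : List ℕ → ℤ) (q : List ℕ) : Fin (τ.childCount q + 1) → ℤ :=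
  fun i => nodeLab τ ℓ q (finRotate _ i) - nodeLab τ ℓ q i

lemma sum_inc (τ : PTree) (ℓ : List ℕ → ℤ) (q : List ℕ) :
    ∑ i, inc τ ℓ q i = 0 := by
  unfold inc
  rw [Finset.sum_sub_distrib]
  rw [Equiv.sum_comp (finRotate _) (nodeLab τ ℓ q)]
  simp

-- stars and bars
lemma card_sum_tuples (d n : ℕ) :
    Nat.card {y : Fin d → ℕ // ∑ i, y i = n} = (d + n - 1).choose n := by
  classical
  have e : Sym (Fin d) n ≃ {y : Fin d → ℕ // ∑ i, y i = n} := by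
    refine ⟨fun m => ⟨fun i => Multiset.count i m.1, ?_⟩,
      fun y => ⟨∑ i, (y.1 i) • ({i} : Multiset (Fin d)), ?_⟩, ?_, ?_⟩
    · obtain ⟨m, hm⟩ := m
      simpa [hm] using (Multiset.sum_count_eq_card (s := Finset.univ) (m := m) (by simp))
    · have hcard := map_sum
        ({ toFun := Multiset.card, map_zero' := Multiset.card_zero,
           map_add' := Multiset.card_add } : Multiset (Fin d) →+ ℕ)
        (fun i => (y.1 i) • ({i} : Multiset (Fin d))) Finset.univ
      simp only [AddMonoidHom.coe_mk, ZeroHom.coe_mk] at hcard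
      rw [hcard]
      simp [y.2]
    · rintro ⟨m, hm⟩
      apply Subtype.ext
      apply Multiset.ext.2
      intro j
      simp [Multiset.count_sum', Multiset.count_singleton]
    · rintro ⟨y, hy⟩
      apply Subtype.ext
      funext j
      simp [Multiset.count_sum', Multiset.count_singleton]
  rw [← Nat.card_congr e, Nat.card_eq_fintype_card, Sym.card_sym_eq_choose]
  simp

lemma card_incs (c : ℕ) :
    Nat.card {x : Fin (c + 1) → ℤ // (∀ i, -1 ≤ x i) ∧ ∑ i, x i = 0}
      = (2 * (c + 1) - 1).choose ((c + 1) - 1) := by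
  have e : {x : Fin (c + 1) → ℤ // (∀ i, -1 ≤ x i) ∧ ∑ i, x i = 0}
      ≃ {y : Fin (c + 1) → ℕ // ∑ i, y i = c + 1} := by
    refine ⟨fun x => ⟨fun i => (x.1 i + 1).toNat, ?_⟩,
      fun y => ⟨fun i => (y.1 i : ℤ) - 1, ⟨?_, ?_⟩⟩, ?_, ?_⟩
    · obtain ⟨x, hx1, hx2⟩ := x
      have : ∀ i, ((x i + 1).toNat : ℤ) = x i + 1 := fun i =>
        Int.toNat_of_nonneg (by have := hx1 i; omega)
      have h := congrArg (Int.ofNat) (rfl : (∑ i, (x i + 1).toNat) = ∑ i, (x i + 1).toNat)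
      have : ((∑ i, (x i + 1).toNat : ℕ) : ℤ) = ∑ i, (x i + 1) := by
        push_cast [this]
        rfl
      have h2 : (∑ i, (x i + 1)) = (c + 1 : ℤ) := by
        rw [Finset.sum_add_distrib, hx2]
        simp
      have := this.trans h2
      exact_mod_cast this
    · intro i
      show -1 ≤ (y.1 i : ℤ) - 1
      have : (0 : ℤ) ≤ (y.1 i : ℤ) := Int.natCast_nonneg _
      omega
    · have : (∑ i, ((y.1 i : ℤ) - 1)) = (∑ i, (y.1 i : ℤ)) - (c + 1) := by
        rw [Finset.sum_sub_distrib]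
        simp
      rw [this]
      have : (∑ i, (y.1 i : ℤ)) = ((∑ i, y.1 i : ℕ) : ℤ) := by push_cast; rfl
      rw [this, y.2]
      push_cast
      ring
    · rintro ⟨x, hx1, hx2⟩
      apply Subtype.ext
      funext i
      have := hx1 i
      simp only
      omega
    · rintro ⟨y, hy⟩
      apply Subtype.ext
      funext i
      simp only
      omega
  rw [Nat.card_congr e, card_sum_tuples]
  have h1 : c + 1 + (c + 1) - 1 = 2 * (c + 1) - 1 := by omega
  rw [h1]
  have h2 : (c + 1) - 1 = c := rfl
  rw [h2, show 2 * (c + 1) - 1 = 2 * c + 1 from by omega, Nat.choose_symm_half]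

lemma inc_spec_lt (τ : PTree) (ℓ : List ℕ → ℤ) (q : List ℕ)
    (i : Fin (τ.childCount q + 1)) (hi : (i : ℕ) < τ.childCount q) :
    inc τ ℓ q i = ℓ (q ++ [(i : ℕ)]) -
      (if (i : ℕ) = 0 then ℓ q.dropLast else ℓ (q ++ [(i : ℕ) - 1])) := by
  unfold inc nodeLab
  rw [finRotate_succ_apply, Fin.val_add_one]
  have hlast : i ≠ Fin.last _ := by
    intro h
    rw [h] at hi
    simp [Fin.val_last] at hi
  rw [if_neg hlast]
  simp only [Nat.succ_ne_zero, if_false, Nat.add_sub_cancel]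

lemma inc_spec_last (τ : PTree) (ℓ : List ℕ → ℤ) (q : List ℕ)
    (i : Fin (τ.childCount q + 1)) (hi : (i : ℕ) = τ.childCount q)
    (hc : 0 < τ.childCount q) :
    inc τ ℓ q i = ℓ q.dropLast - ℓ (q ++ [τ.childCount q - 1]) := by
  unfold inc nodeLab
  have hlast : i = Fin.last _ := Fin.ext (by simpa using hi)
  rw [finRotate_succ_apply, Fin.val_add_one, if_pos hlast, if_pos rfl, hi,
    if_neg (by omega)]

lemma inc_spec_zero (τ : PTree) (ℓ : List ℕ → ℤ) (q : List ℕ)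
    (i : Fin (τ.childCount q + 1)) (hc : τ.childCount q = 0) :
    inc τ ℓ q i = 0 := by
  unfold inc nodeLab
  have h1 : ∀ j : Fin (τ.childCount q + 1), (j : ℕ) = 0 := by
    intro j; have := j.isLt; omega
  rw [if_pos (h1 _), if_pos (h1 _)]
  ring

def blist (τ : PTree) : List (List ℕ) := τ.positions.filter (fun q => q.length % 2 == 1)

lemma mem_blist {τ : PTree} {q : List ℕ} :
    q ∈ blist τ ↔ q ∈ τ.positions ∧ q.length % 2 = 1 := by
  simp [blist, List.mem_filter]

def Labs (τ : PTree) := {ℓ : List ℕ → ℤ //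
      (∀ q : List ℕ, ¬(q ∈ τ.positions ∧ q.length % 2 = 0) → ℓ q = 0) ∧
      ℓ [] = 0 ∧
      (∀ q ∈ τ.positions, q.length % 2 = 1 →
        (∀ j : ℕ, j + 1 < τ.childCount q → ℓ (q ++ [j]) - 1 ≤ ℓ (q ++ [j + 1])) ∧
        (0 < τ.childCount q →
          ℓ q.dropLast - 1 ≤ ℓ (q ++ [0]) ∧
            ℓ (q ++ [τ.childCount q - 1]) - 1 ≤ ℓ q.dropLast))}

def Incs (τ : PTree) := ∀ q : {q // q ∈ blist τ},
  {x : Fin (τ.childCount q.1 + 1) → ℤ // (∀ i, -1 ≤ x i) ∧ ∑ i, x i = 0}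

lemma inc_ge (τ : PTree) (ℓ : Labs τ) (q : List ℕ) (hqm : q ∈ τ.positions)
    (hqo : q.length % 2 = 1) : ∀ i, -1 ≤ inc τ ℓ.1 q i := by
  intro i
  obtain ⟨h3a, h3b⟩ := ℓ.2.2.2 q hqm hqo
  rcases Nat.lt_or_ge (i : ℕ) (τ.childCount q) with hi | hi
  · rw [inc_spec_lt τ ℓ.1 q i hi]
    by_cases h0 : (i : ℕ) = 0
    · rw [if_pos h0, h0]
      have := (h3b (by omega)).1
      linarith
    · rw [if_neg h0]
      have := h3a ((i : ℕ) - 1) (by omega)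
      have he : (i : ℕ) - 1 + 1 = (i : ℕ) := by omega
      rw [he] at this
      linarith
  · have hic : (i : ℕ) = τ.childCount q := by have := i.isLt; omega
    by_cases hc : 0 < τ.childCount q
    · rw [inc_spec_last τ ℓ.1 q i hic hc]
      have := (h3b hc).2
      linarith
    · rw [inc_spec_zero τ ℓ.1 q i (by omega)]
      norm_num

def Φ (τ : PTree) : Labs τ → Incs τ := fun ℓ q =>
  ⟨inc τ ℓ.1 q.1,
    inc_ge τ ℓ q.1 (mem_blist.1 q.2).1 (mem_blist.1 q.2).2,
    sum_inc τ ℓ.1 q.1⟩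

lemma Φ_injective (τ : PTree) : Function.Injective (Φ τ) := by
  intro ℓ ℓ' hΦ
  have hinc : ∀ (q : List ℕ) (hq : q ∈ blist τ), inc τ ℓ.1 q = inc τ ℓ'.1 q := by
    intro q hq
    have := congrFun hΦ ⟨q, hq⟩
    exact congrArg Subtype.val this
  have key : ∀ n (p : List ℕ), p.length ≤ n → p ∈ τ.positions → p.length % 2 = 0 →
      ℓ.1 p = ℓ'.1 p := by
    intro n
    induction n with
    | zero =>
      intro p hlen _ _
      have : p = [] := List.length_eq_zero_iff.1 (by omega)
      rw [this, ℓ.2.2.1, ℓ'.2.2.1]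
    | succ n ih =>
      intro p hlen hmem hpar
      by_cases hne : p = []
      · rw [hne, ℓ.2.2.1, ℓ'.2.2.1]
      · obtain ⟨hdropmem, heq, hlt⟩ := dropLast_mem hmem hne
        set q := p.dropLast with hqdef
        have hplen : 2 ≤ p.length := by
          have h1 : p.length ≠ 0 := fun h => hne (List.length_eq_zero_iff.1 h)
          omega
        have hqlen : q.length = p.length - 1 := by rw [hqdef, List.length_dropLast]
        have hqo : q.length % 2 = 1 := by omega
        have hqne : q ≠ [] := by
          intro h
          rw [h] at hqo
          simp at hqo
        have hqb : q ∈ blist τ := mem_blist.2 ⟨hdropmem, hqo⟩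
        have hparent : ℓ.1 q.dropLast = ℓ'.1 q.dropLast := by
          obtain ⟨hdm, _, _⟩ := dropLast_mem hdropmem hqne
          apply ih q.dropLast
          · rw [List.length_dropLast]; omega
          · exact hdm
          · rw [List.length_dropLast]; omega
        have hI := hinc q hqb
        have hall : ∀ j', j' < τ.childCount q → ℓ.1 (q ++ [j']) = ℓ'.1 (q ++ [j']) := by
          intro j'
          induction j' with
          | zero =>
            intro h0
            have hfin : ((⟨0, by omega⟩ : Fin (τ.childCount q + 1)) : ℕ) < τ.childCount q := h0
            have e1 := inc_spec_lt τ ℓ.1 q ⟨0, by omega⟩ hfin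
            have e2 := inc_spec_lt τ ℓ'.1 q ⟨0, by omega⟩ hfin
            rw [congrFun hI _] at e1
            simp only [if_pos rfl, if_true, ite_true] at e1 e2
            have := e1.symm.trans e2
            linarith [this, hparent]
          | succ j' ihj =>
            intro h
            have hfin : ((⟨j' + 1, by omega⟩ : Fin (τ.childCount q + 1)) : ℕ) < τ.childCount q := h
            have e1 := inc_spec_lt τ ℓ.1 q ⟨j' + 1, by omega⟩ hfin
            have e2 := inc_spec_lt τ ℓ'.1 q ⟨j' + 1, by omega⟩ hfin
            rw [congrFun hI _] at e1
            simp only [Nat.succ_ne_zero, if_false, Nat.add_sub_cancel] at e1 e2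
            have hprev := ihj (by omega)
            have := e1.symm.trans e2
            linarith [this, hprev]
        have := hall (p.getLast hne) hlt
        rw [heq] at this
        exact this
  apply Subtype.ext
  funext p
  by_cases hw : p ∈ τ.positions ∧ p.length % 2 = 0
  · exact key p.length p le_rfl hw.1 hw.2
  · rw [ℓ.2.1 p hw, ℓ'.2.1 p hw]

def gX (τ : PTree) (X : Incs τ) (q : List ℕ) (i : ℕ) : ℤ :=
  if h : q ∈ blist τ then
    (if h2 : i < τ.childCount q + 1 then (X ⟨q, h⟩).1 ⟨i, h2⟩ else 0)
  else 0

def LX (τ : PTree) (X : Incs τ) (p : List ℕ) : ℤ :=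
  if p ∈ τ.positions ∧ p.length % 2 = 0 then lblAux (gX τ X) p else 0

lemma gX_eq (τ : PTree) (X : Incs τ) (q : List ℕ) (h : q ∈ blist τ) (i : ℕ)
    (h2 : i < τ.childCount q + 1) : gX τ X q i = (X ⟨q, h⟩).1 ⟨i, h2⟩ := by
  unfold gX
  rw [dif_pos h, dif_pos h2]

lemma gX_ge (τ : PTree) (X : Incs τ) (q : List ℕ) (h : q ∈ blist τ) (i : ℕ)
    (h2 : i < τ.childCount q + 1) : -1 ≤ gX τ X q i := by
  rw [gX_eq τ X q h i h2]
  exact (X ⟨q, h⟩).2.1 _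

lemma blist_ne_nil {τ : PTree} {q : List ℕ} (hq : q ∈ blist τ) : q ≠ [] := by
  have h := (mem_blist.1 hq).2
  intro he
  rw [he] at h
  simp at h

lemma LX_drop (τ : PTree) (X : Incs τ) (q : List ℕ) (hq : q ∈ blist τ) :
    LX τ X q.dropLast = lblAux (gX τ X) q.dropLast := by
  obtain ⟨hm, ho⟩ := mem_blist.1 hq
  have hd := dropLast_mem hm (blist_ne_nil hq)
  have hql : 1 ≤ q.length := List.length_pos_iff.2 (blist_ne_nil hq)
  unfold LX
  rw [if_pos ⟨hd.1, by rw [List.length_dropLast]; omega⟩]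

lemma LX_child (τ : PTree) (X : Incs τ) (q : List ℕ) (hq : q ∈ blist τ) {j : ℕ}
    (hj : j < τ.childCount q) :
    LX τ X (q ++ [j]) = lblAux (gX τ X) q.dropLast + ∑ i ∈ Finset.range (j + 1), gX τ X q i := by
  obtain ⟨hm, ho⟩ := mem_blist.1 hq
  unfold LX
  rw [if_pos ⟨(append_mem_iff hm j).2 hj, by simp [List.length_append]; omega⟩,
    lblAux_concat _ (blist_ne_nil hq) j]

lemma gX_sum (τ : PTree) (X : Incs τ) (q : List ℕ) (hq : q ∈ blist τ) :
    ∑ i ∈ Finset.range (τ.childCount q + 1), gX τ X q i = 0 := by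
  rw [← Fin.sum_univ_eq_sum_range]
  have h1 : ∀ i : Fin (τ.childCount q + 1), gX τ X q i.val = (X ⟨q, hq⟩).1 i :=
    fun i => gX_eq τ X q hq i.val i.isLt
  rw [Finset.sum_congr rfl (fun i _ => h1 i)]
  exact (X ⟨q, hq⟩).2.2

lemma LX_mem_Labs (τ : PTree) (X : Incs τ) :
    (∀ q : List ℕ, ¬(q ∈ τ.positions ∧ q.length % 2 = 0) → LX τ X q = 0) ∧
      LX τ X [] = 0 ∧
      (∀ q ∈ τ.positions, q.length % 2 = 1 →
        (∀ j : ℕ, j + 1 < τ.childCount q →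
          LX τ X (q ++ [j]) - 1 ≤ LX τ X (q ++ [j + 1])) ∧
        (0 < τ.childCount q →
          LX τ X q.dropLast - 1 ≤ LX τ X (q ++ [0]) ∧
            LX τ X (q ++ [τ.childCount q - 1]) - 1 ≤ LX τ X q.dropLast)) := by
  refine ⟨fun q hq => if_neg hq, ?_, ?_⟩
  · unfold LX
    rw [if_pos ⟨nil_mem_positions τ, by simp⟩]
    exact lblAux_nil _
  · intro q hm ho
    have hq : q ∈ blist τ := mem_blist.2 ⟨hm, ho⟩
    constructor
    · intro j hj
      rw [LX_child τ X q hq (by omega), LX_child τ X q hq hj, Finset.sum_range_succ _ (j + 1)]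
      have := gX_ge τ X q hq (j + 1) (by omega)
      linarith
    · intro hc
      constructor
      · rw [LX_drop τ X q hq, LX_child τ X q hq hc, Finset.sum_range_one]
        have := gX_ge τ X q hq 0 (by omega)
        linarith
      · rw [LX_drop τ X q hq, LX_child τ X q hq (show τ.childCount q - 1 < _ by omega)]
        have he : τ.childCount q - 1 + 1 = τ.childCount q := by omega
        rw [he]
        have hs := gX_sum τ X q hq
        rw [Finset.sum_range_succ] at hs
        have := gX_ge τ X q hq (τ.childCount q) (by omega)
        linarith

lemma Φ_surjective (τ : PTree) : Function.Surjective (Φ τ) := by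
  intro X
  refine ⟨⟨LX τ X, LX_mem_Labs τ X⟩, ?_⟩
  funext q
  apply Subtype.ext
  funext i
  obtain ⟨q, hq⟩ := q
  show inc τ (LX τ X) q i = (X ⟨q, hq⟩).1 i
  have hcc : τ.childCount ((⟨q, hq⟩ : {q // q ∈ blist τ}) : List ℕ) = τ.childCount q := rfl
  have hc1 := i.isLt
  rcases Nat.lt_or_ge (i : ℕ) (τ.childCount q) with hi | hi
  · rw [inc_spec_lt τ (LX τ X) q i hi]
    by_cases h0 : (i : ℕ) = 0
    · rw [if_pos h0, h0, LX_child τ X q hq (by omega), LX_drop τ X q hq,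
        Finset.sum_range_one, gX_eq τ X q hq 0 (by omega)]
      have : (⟨0, by omega⟩ : Fin (τ.childCount q + 1)) = i := Fin.ext (by simp [h0])
      rw [this]
      ring
    · rw [if_neg h0, LX_child τ X q hq hi, LX_child τ X q hq (show (i : ℕ) - 1 < _ by omega)]
      have he : (i : ℕ) - 1 + 1 = (i : ℕ) := by omega
      rw [he, Finset.sum_range_succ (gX τ X q) (i : ℕ), gX_eq τ X q hq (i : ℕ) (by omega)]
      have hfe : (⟨(i : ℕ), by omega⟩ : Fin (τ.childCount q + 1)) = i := Fin.ext rfl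
      rw [hfe]
      ring
  · have hic : (i : ℕ) = τ.childCount q := by omega
    by_cases hc : 0 < τ.childCount q
    · rw [inc_spec_last τ (LX τ X) q i hic hc, LX_drop τ X q hq,
        LX_child τ X q hq (show τ.childCount q - 1 < _ by omega)]
      have he : τ.childCount q - 1 + 1 = τ.childCount q := by omega
      rw [he]
      have hs := gX_sum τ X q hq
      rw [Finset.sum_range_succ] at hs
      have h2 := gX_eq τ X q hq (τ.childCount q) (by omega)
      have : (⟨τ.childCount q, by omega⟩ : Fin (τ.childCount q + 1)) = i := Fin.ext (by simp [hic])
      rw [this] at h2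
      linarith
    · rw [inc_spec_zero τ (LX τ X) q i (by omega)]
      have hs := (X ⟨q, hq⟩).2.2
      have hcz : τ.childCount q = 0 := by omega
      have : ∑ k, (X ⟨q, hq⟩).1 k = (X ⟨q, hq⟩).1 i := by
        apply Finset.sum_eq_single_of_mem i (Finset.mem_univ i)
        intro b _ hb
        exact absurd (Fin.ext (by omega : (b : ℕ) = (i : ℕ))) hb
      rw [this] at hs
      exact hs.symm

lemma main (τ : PTree) :
    Nat.card (Labs τ) = ((blist τ).map (fun q =>
      Nat.choose (2 * (τ.childCount q + 1) - 1) ((τ.childCount q + 1) - 1))).prod := by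
  classical
  rw [Nat.card_eq_of_bijective (Φ τ) ⟨Φ_injective τ, Φ_surjective τ⟩]
  have h1 : Nat.card (Incs τ) = ∏ q : {q // q ∈ blist τ},
      Nat.card {x : Fin (τ.childCount q.1 + 1) → ℤ // (∀ i, -1 ≤ x i) ∧ ∑ i, x i = 0} :=
    Nat.card_pi
  rw [h1]
  have h2 : ∀ q : {q // q ∈ blist τ},
      Nat.card {x : Fin (τ.childCount q.1 + 1) → ℤ // (∀ i, -1 ≤ x i) ∧ ∑ i, x i = 0}
        = (fun q => Nat.choose (2 * (τ.childCount q + 1) - 1) ((τ.childCount q + 1) - 1)) q.1 :=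
    fun q => card_incs (τ.childCount q.1)
  rw [Finset.prod_congr rfl (fun q _ => h2 q)]
  rw [← Finset.prod_subtype ((blist τ).toFinset) (fun x => List.mem_toFinset)
    (fun q => Nat.choose (2 * (τ.childCount q + 1) - 1) ((τ.childCount q + 1) - 1))]
  exact List.prod_toFinset _ ((positions_nodup τ).filter _)

end BDG

/-- Viewing `τ` as the tree of a mobile (the root and the vertices at even distance from
the root are white, the vertices at odd distance are black), the number of admissible
labelings of the white vertices — label `0` at the root and, around each black vertex `u`
of degree `k` with white neighbours `u_0, ..., u_{k-1}` in clockwise order (`u_0` the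
parent), `ℓ(u_{j+1}) ≥ ℓ(u_j) - 1` cyclically — equals
`∏_{v black} C(2 deg(v) - 1, deg(v) - 1)`.  (Labelings are normalized to vanish away
from the white vertices of `τ`.) -/
theorem stmt19 (τ : PTree) :
    Nat.card {ℓ : List ℕ → ℤ //
      (∀ q : List ℕ, ¬(q ∈ τ.positions ∧ q.length % 2 = 0) → ℓ q = 0) ∧
      ℓ [] = 0 ∧
      (∀ q ∈ τ.positions, q.length % 2 = 1 →
        (∀ j : ℕ, j + 1 < τ.childCount q → ℓ (q ++ [j]) - 1 ≤ ℓ (q ++ [j + 1])) ∧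
        (0 < τ.childCount q →
          ℓ q.dropLast - 1 ≤ ℓ (q ++ [0]) ∧
            ℓ (q ++ [τ.childCount q - 1]) - 1 ≤ ℓ q.dropLast))} =
    ((τ.positions.filter (fun q => q.length % 2 == 1)).map (fun q =>
      Nat.choose (2 * (τ.childCount q + 1) - 1) ((τ.childCount q + 1) - 1))).prod := by
  exact BDG.main τ
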